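/- arXiv:0812.0492 — 2 statements merged into one kernel-verified Lean document; each statement's English description precedes it below -/
import Mathlib

section
/- If the minmax value for Player 1 in G is strictly greater than r, then (⊥, ⊥, ⊥) is not a trembling hand perfect equilibrium of G'. -/
open Filter

/-- A mixed strategy over a finite pure strategy set. -/
def IsMixed {S : Type*} [Fintype S] (σ : S → ℝ) : Prop :=
  (∀ a, 0 ≤ σ a) ∧ ∑ a, σ a = 1

/-- A fully mixed strategy: positive probability on every pure strategy. -/
def IsFullyMixed {S : Type*} [Fintype S] (σ : S → ℝ) : Prop :=
  (∀ a, 0 < σ a) ∧ ∑ a, σ a = 1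

/-- The point mass on a pure strategy. -/
def pureStrat {S : Type*} [DecidableEq S] (a : S) : S → ℝ :=
  fun b => if b = a then 1 else 0

/-- Expected payoff (w.r.t. payoff function `w`) in a three-player game when the
players play mixed strategies `σ1`, `σ2`, `σ3`. -/
noncomputable def expMix3 {S1 S2 S3 : Type*} [Fintype S1] [Fintype S2] [Fintype S3]
    (w : S1 → S2 → S3 → ℝ) (σ1 : S1 → ℝ) (σ2 : S2 → ℝ) (σ3 : S3 → ℝ) : ℝ :=
  ∑ a, ∑ b, ∑ c, σ1 a * σ2 b * σ3 c * w a b c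

/-- Player 1's expected payoff from pure strategy `a` against mixed `σ2`, `σ3`. -/
noncomputable def expPure1 {S1 S2 S3 : Type*} [Fintype S2] [Fintype S3]
    (w : S1 → S2 → S3 → ℝ) (a : S1) (σ2 : S2 → ℝ) (σ3 : S3 → ℝ) : ℝ :=
  ∑ b, ∑ c, σ2 b * σ3 c * w a b c

/-- Nash equilibrium of a three-player game with payoff functions `w1, w2, w3`. -/
def IsNash3 {S1 S2 S3 : Type*} [Fintype S1] [Fintype S2] [Fintype S3]
    (w1 w2 w3 : S1 → S2 → S3 → ℝ) (σ1 : S1 → ℝ) (σ2 : S2 → ℝ) (σ3 : S3 → ℝ) : Prop :=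
  IsMixed σ1 ∧ IsMixed σ2 ∧ IsMixed σ3 ∧
  (∀ τ, IsMixed τ → expMix3 w1 τ σ2 σ3 ≤ expMix3 w1 σ1 σ2 σ3) ∧
  (∀ τ, IsMixed τ → expMix3 w2 σ1 τ σ3 ≤ expMix3 w2 σ1 σ2 σ3) ∧
  (∀ τ, IsMixed τ → expMix3 w3 σ1 σ2 τ ≤ expMix3 w3 σ1 σ2 σ3)

/-- Trembling hand perfection of a profile in a three-player game: some sequence of
fully mixed profiles converging (pointwise) to the profile against which, eventually,
each player's given strategy is a best reply. -/
def IsTHP3 {S1 S2 S3 : Type*} [Fintype S1] [Fintype S2] [Fintype S3]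
    (w1 w2 w3 : S1 → S2 → S3 → ℝ) (μ1 : S1 → ℝ) (μ2 : S2 → ℝ) (μ3 : S3 → ℝ) : Prop :=
  ∃ σ1 : ℕ → S1 → ℝ, ∃ σ2 : ℕ → S2 → ℝ, ∃ σ3 : ℕ → S3 → ℝ,
    (∀ k, IsFullyMixed (σ1 k) ∧ IsFullyMixed (σ2 k) ∧ IsFullyMixed (σ3 k)) ∧
    (∀ a, Tendsto (fun k => σ1 k a) atTop (nhds (μ1 a))) ∧
    (∀ b, Tendsto (fun k => σ2 k b) atTop (nhds (μ2 b))) ∧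
    (∀ c, Tendsto (fun k => σ3 k c) atTop (nhds (μ3 c))) ∧
    ∃ N, ∀ k ≥ N,
      (∀ τ, IsMixed τ → expMix3 w1 τ (σ2 k) (σ3 k) ≤ expMix3 w1 μ1 (σ2 k) (σ3 k)) ∧
      (∀ τ, IsMixed τ → expMix3 w2 (σ1 k) τ (σ3 k) ≤ expMix3 w2 (σ1 k) μ2 (σ3 k)) ∧
      (∀ τ, IsMixed τ → expMix3 w3 (σ1 k) (σ2 k) τ ≤ expMix3 w3 (σ1 k) (σ2 k) μ3)

/-- The minmax value of Player 1 in a three-player game: the infimum over mixed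
strategies of Players 2 and 3 of the best expected payoff of Player 1. -/
noncomputable def minmaxVal {S1 S2 S3 : Type*} [Fintype S1] [Fintype S2] [Fintype S3]
    (w : S1 → S2 → S3 → ℝ) : ℝ :=
  sInf {x | ∃ σ2 σ3, IsMixed σ2 ∧ IsMixed σ3 ∧ x = ⨆ a, expPure1 w a σ2 σ3}

/-- Player 1's payoff in the game `G'`: `r` if some player plays `⊥` (i.e. `none`),
and the `G`-payoff otherwise. -/
noncomputable def payBot {S1 S2 S3 : Type*} (u1 : S1 → S2 → S3 → ℤ) (r : ℤ) :
    Option S1 → Option S2 → Option S3 → ℝ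
  | some a, some b, some c => (u1 a b c : ℝ)
  | _, _, _ => (r : ℝ)

/-- The all-zero payoff function (for Players 2 and 3 in `G'`). -/
def zeroPay {S1 S2 S3 : Type*} : Option S1 → Option S2 → Option S3 → ℝ :=
  fun _ _ _ => 0


lemma expMix3_pure {S1 S2 S3 : Type*} [Fintype S1] [Fintype S2] [Fintype S3] [DecidableEq S1]
    (w : S1 → S2 → S3 → ℝ) (a0 : S1) (σ2 : S2 → ℝ) (σ3 : S3 → ℝ) :
    expMix3 w (pureStrat a0) σ2 σ3 = expPure1 w a0 σ2 σ3 := by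
  unfold expMix3 expPure1
  rw [Finset.sum_eq_single a0]
  · simp [pureStrat]
  · intro a _ ha; simp [pureStrat, ha]
  · simp

lemma payBot_none1 {S1 S2 S3 : Type*} (u1 : S1 → S2 → S3 → ℤ) (r : ℤ)
    (b : Option S2) (c : Option S3) : payBot u1 r none b c = r := by
  cases b <;> cases c <;> rfl

lemma expPure1_const {S1 S2 S3 : Type*} [Fintype S2] [Fintype S3]
    (x : ℝ) (a : S1) (σ2 : S2 → ℝ) (σ3 : S3 → ℝ)
    (h2 : ∑ b, σ2 b = 1) (h3 : ∑ c, σ3 c = 1) :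
    expPure1 (fun _ _ _ => x) a σ2 σ3 = x := by
  unfold expPure1
  simp only [mul_assoc, ← Finset.mul_sum, ← Finset.sum_mul, h2, h3, one_mul]

lemma expPure1_botNone {S1 S2 S3 : Type*} [Fintype S2] [Fintype S3]
    (u1 : S1 → S2 → S3 → ℤ) (r : ℤ) (σ2 : Option S2 → ℝ) (σ3 : Option S3 → ℝ)
    (h2 : ∑ b, σ2 b = 1) (h3 : ∑ c, σ3 c = 1) :
    expPure1 (payBot u1 r) none σ2 σ3 = r := by
  have : expPure1 (payBot u1 r) (none : Option S1) σ2 σ3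
      = expPure1 (fun _ _ _ => (r:ℝ)) (none : Option S1) σ2 σ3 := by
    unfold expPure1; simp only [payBot_none1]
  rw [this, expPure1_const _ _ _ _ h2 h3]

lemma expPure1_botSome {S1 S2 S3 : Type*} [Fintype S2] [Fintype S3]
    (u1 : S1 → S2 → S3 → ℤ) (r : ℤ) (a : S1) (σ2 : Option S2 → ℝ) (σ3 : Option S3 → ℝ)
    (h3 : ∑ c, σ3 c = 1) :
    expPure1 (payBot u1 r) (some a) σ2 σ3
      = σ2 none * r + (∑ b, σ2 (some b)) * (σ3 none * r)
        + ∑ b, ∑ c, σ2 (some b) * σ3 (some c) * (u1 a b c : ℝ) := by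
  unfold expPure1
  rw [Fintype.sum_option]
  have h1 : (∑ c, σ2 none * σ3 c * payBot u1 r (some a) none c) = σ2 none * r := by
    have e : ∀ c, payBot u1 r (some a) none c = (r:ℝ) := fun c => by cases c <;> rfl
    simp only [e, mul_assoc, ← Finset.mul_sum, ← Finset.sum_mul, h3, one_mul]
  have h2' : ∀ b : S2, (∑ c, σ2 (some b) * σ3 c * payBot u1 r (some a) (some b) c)
      = σ2 (some b) * (σ3 none * r) + ∑ c, σ2 (some b) * σ3 (some c) * (u1 a b c : ℝ) := by
    intro b
    rw [Fintype.sum_option]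
    congr 1
    · show σ2 (some b) * σ3 none * (r:ℝ) = _
      ring
  rw [h1, Finset.sum_congr rfl (fun b _ => h2' b), Finset.sum_add_distrib, ← Finset.sum_mul,
    add_assoc]

lemma expPure1_ge_const {S1 S2 S3 : Type*} [Fintype S2] [Fintype S3]
    (w : S1 → S2 → S3 → ℝ) (B : ℝ) (a : S1) (σ2 : S2 → ℝ) (σ3 : S3 → ℝ)
    (m2 : IsMixed σ2) (m3 : IsMixed σ3) (hB : ∀ b c, B ≤ w a b c) :
    B ≤ expPure1 w a σ2 σ3 := by
  have : expPure1 (fun _ _ _ => B) a σ2 σ3 ≤ expPure1 w a σ2 σ3 := by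
    refine Finset.sum_le_sum fun b _ => Finset.sum_le_sum fun c _ => ?_
    exact mul_le_mul_of_nonneg_left (hB b c) (mul_nonneg (m2.1 b) (m3.1 c))
  rwa [expPure1_const B a σ2 σ3 m2.2 m3.2] at this

lemma minmax_le_exists {S1 S2 S3 : Type*} [Fintype S1] [Fintype S2] [Fintype S3]
    [Nonempty S1] [Nonempty S2] [Nonempty S3]
    (w : S1 → S2 → S3 → ℝ) (τ2 : S2 → ℝ) (τ3 : S3 → ℝ)
    (m2 : IsMixed τ2) (m3 : IsMixed τ3) :
    ∃ a, minmaxVal w ≤ expPure1 w a τ2 τ3 := by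
  have a0 : S1 := Classical.arbitrary S1
  set B : ℝ := (Finset.univ : Finset (S2 × S3)).inf' ⟨(Classical.arbitrary _),
      Finset.mem_univ _⟩ (fun p => w a0 p.1 p.2) with hBdef
  have hB : ∀ b c, B ≤ w a0 b c := fun b c =>
    Finset.inf'_le _ (Finset.mem_univ (b, c))
  have hbdd : BddBelow {x | ∃ σ2 σ3, IsMixed σ2 ∧ IsMixed σ3 ∧
      x = ⨆ a, expPure1 w a σ2 σ3} := by
    refine ⟨B, fun x hx => ?_⟩
    obtain ⟨π2, π3, n2, n3, rfl⟩ := hx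
    have h1 : B ≤ expPure1 w a0 π2 π3 := expPure1_ge_const w B a0 π2 π3 n2 n3 hB
    exact h1.trans (le_ciSup (f := fun a => expPure1 w a π2 π3) (Set.Finite.bddAbove (Set.finite_range _)) a0)
  have hmem : (⨆ a, expPure1 w a τ2 τ3) ∈ {x | ∃ σ2 σ3, IsMixed σ2 ∧ IsMixed σ3 ∧
      x = ⨆ a, expPure1 w a σ2 σ3} := ⟨τ2, τ3, m2, m3, rfl⟩
  have hle : minmaxVal w ≤ ⨆ a, expPure1 w a τ2 τ3 := csInf_le hbdd hmem
  obtain ⟨a, ha⟩ := Finite.exists_max (fun a => expPure1 w a τ2 τ3)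
  exact ⟨a, hle.trans (ciSup_le ha)⟩

/-- if Player 1's minmax value in `G` is strictly greater than `r`,
then `(⊥, ⊥, ⊥)` is not a trembling hand perfect equilibrium of `G'`. -/
theorem bot_profile_not_isTHP_of_minmax_gt
    {S1 S2 S3 : Type*} [Fintype S1] [Fintype S2] [Fintype S3]
    [Nonempty S1] [Nonempty S2] [Nonempty S3]
    [DecidableEq S1] [DecidableEq S2] [DecidableEq S3]
    (u1 : S1 → S2 → S3 → ℤ) (r : ℤ)
    (h : (r : ℝ) < minmaxVal (fun a b c => (u1 a b c : ℝ))) :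
    ¬ IsTHP3 (payBot u1 r) zeroPay zeroPay
      (pureStrat (none : Option S1)) (pureStrat (none : Option S2))
      (pureStrat (none : Option S3)) := by
  rintro ⟨σ1, σ2, σ3, hfm, -, -, -, N, hN⟩
  set w : S1 → S2 → S3 → ℝ := fun a b c => (u1 a b c : ℝ) with hw
  obtain ⟨hbr1, -, -⟩ := hN N le_rfl
  have fm2 := (hfm N).2.1
  have fm3 := (hfm N).2.2
  set s2 := σ2 N with hs2
  set s3 := σ3 N with hs3
  set p2 : ℝ := ∑ b, s2 (some b) with hp2def
  set p3 : ℝ := ∑ c, s3 (some c) with hp3def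
  have hp2 : 0 < p2 := Finset.sum_pos (fun b _ => fm2.1 (some b)) Finset.univ_nonempty
  have hp3 : 0 < p3 := Finset.sum_pos (fun c _ => fm3.1 (some c)) Finset.univ_nonempty
  have hs2none : s2 none + p2 = 1 := by
    have := fm2.2; rwa [Fintype.sum_option] at this
  have hs3none : s3 none + p3 = 1 := by
    have := fm3.2; rwa [Fintype.sum_option] at this
  set τ2 : S2 → ℝ := fun b => s2 (some b) / p2 with hτ2
  set τ3 : S3 → ℝ := fun c => s3 (some c) / p3 with hτ3
  have m2 : IsMixed τ2 := ⟨fun b => div_nonneg (fm2.1 _).le hp2.le,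
    by rw [← Finset.sum_div, ← hp2def, div_self hp2.ne']⟩
  have m3 : IsMixed τ3 := ⟨fun c => div_nonneg (fm3.1 _).le hp3.le,
    by rw [← Finset.sum_div, ← hp3def, div_self hp3.ne']⟩
  obtain ⟨a, ha⟩ := minmax_le_exists w τ2 τ3 m2 m3
  have hmix : IsMixed (pureStrat (some a : Option S1)) := by
    constructor
    · intro b; unfold pureStrat; split <;> norm_num
    · simp [pureStrat]
  have hle := hbr1 (pureStrat (some a)) hmix
  rw [expMix3_pure, expMix3_pure, expPure1_botNone u1 r s2 s3 fm2.2 fm3.2,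
    expPure1_botSome u1 r a s2 s3 fm3.2] at hle
  have hsum : ∑ b, ∑ c, s2 (some b) * s3 (some c) * (u1 a b c : ℝ)
      = p2 * p3 * expPure1 w a τ2 τ3 := by
    unfold expPure1
    rw [Finset.mul_sum]
    refine Finset.sum_congr rfl fun b _ => ?_
    rw [Finset.mul_sum]
    refine Finset.sum_congr rfl fun c _ => ?_
    rw [hτ2, hτ3, hw]
    field_simp
  rw [hsum, ← hp2def] at hle
  have e2 : s2 none = 1 - p2 := by linarith
  have e3 : s3 none = 1 - p3 := by linarith
  rw [e2, e3] at hle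
  have hX : (r : ℝ) < expPure1 w a τ2 τ3 := lt_of_lt_of_le h ha
  nlinarith [mul_pos hp2 hp3, mul_pos (mul_pos hp2 hp3) (sub_pos.2 hX)]
end

section
/- For a finite three-player game G with integer payoffs and integer r: the Nash equilibrium (⊥,⊥,⊥) of G' is trembling hand perfect if the minmax value of Player 1 in G is strictly less than r, and is not trembling hand perfect if the minmax value is strictly greater than r. Hence the promise problem of approximating the minmax value reduces to deciding trembling hand perfection of a given equilibrium. -/
open Filter

/-! If players 2 and 3 play `⊥` with probabilities `1 - e2`, `1 - e3` and otherwise `ρ2`, `ρ3`,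
then `⊥` earns player 1 exactly `r`, while `a ∈ S1` earns `(1 - e2 e3) r + e2 e3 u1(a, ρ2, ρ3)`.
So `⊥` is a best reply to such trembles iff `ρ2, ρ3` hold player 1 to at most `r` in `G`. If the
minmax value is below `r`, perturbing a minmaxing profile to full support keeps it below `r`
(by continuity), and these trembles make `(⊥, ⊥, ⊥)` perfect. Conversely, every fully mixed
strategy on `Option S` is such a tremble, so a perfecting sequence yields `ρ2, ρ3` showing that
the minmax value is at most `r`. -/

open Topology

section Strategies

variable {S : Type*}

def withBot (e : ℝ) (ρ : S → ℝ) : Option S → ℝ :=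
  fun o => o.elim (1 - e) (fun a => e * ρ a)

lemma tendsto_withBot [DecidableEq S] {ι : Type*} {l : Filter ι} {e : ι → ℝ} {ρ : ι → S → ℝ}
    {ρ₀ : S → ℝ} (he : Tendsto e l (𝓝 0)) (hρ : ∀ a, Tendsto (fun k => ρ k a) l (𝓝 (ρ₀ a)))
    (o : Option S) : Tendsto (fun k => withBot (e k) (ρ k) o) l (𝓝 (pureStrat none o)) := by
  cases o with
  | none => simpa [withBot, pureStrat] using tendsto_const_nhds.sub he
  | some a => simpa [withBot, pureStrat] using he.mul (hρ a)

variable [Fintype S]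

lemma isMixed_pureStrat [DecidableEq S] (a : S) : IsMixed (pureStrat a) :=
  ⟨fun b => by unfold pureStrat; split_ifs <;> norm_num, by simp [pureStrat]⟩

noncomputable def unifMix (ε : ℝ) (τ : S → ℝ) : S → ℝ :=
  fun a => (1 - ε) * τ a + ε / Fintype.card S

lemma sum_withBot {e : ℝ} {ρ : S → ℝ} (hρ : ∑ a, ρ a = 1) : ∑ o, withBot e ρ o = 1 := by
  simp [withBot, Fintype.sum_option, ← Finset.mul_sum, hρ]

lemma isFullyMixed_withBot {e : ℝ} {ρ : S → ℝ} (hρ : IsFullyMixed ρ) (he0 : 0 < e)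
    (he1 : e < 1) : IsFullyMixed (withBot e ρ) := by
  refine ⟨fun o => ?_, sum_withBot hρ.2⟩
  cases o with
  | none => simpa [withBot] using he1
  | some a => exact mul_pos he0 (hρ.1 a)

lemma IsFullyMixed.exists_eq_withBot [Nonempty S] {σ : Option S → ℝ} (hσ : IsFullyMixed σ) :
    ∃ p ρ, 0 < p ∧ IsMixed ρ ∧ σ = withBot p ρ := by
  set p := ∑ a, σ (some a)
  have hp : 0 < p := Finset.sum_pos (fun a _ => hσ.1 _) Finset.univ_nonempty
  refine ⟨p, fun a => σ (some a) / p, hp,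
    ⟨fun a => div_nonneg (hσ.1 _).le hp.le, by rw [← Finset.sum_div, div_self hp.ne']⟩, ?_⟩
  have hnone : σ none = 1 - p := by
    have := hσ.2
    rw [Fintype.sum_option] at this
    linarith
  funext o
  cases o with
  | none => exact hnone
  | some a => simp [withBot, mul_div_cancel₀ _ hp.ne']

lemma IsMixed.isFullyMixed_unifMix [Nonempty S] {τ : S → ℝ} (hτ : IsMixed τ) {ε : ℝ}
    (hε0 : 0 < ε) (hε1 : ε ≤ 1) : IsFullyMixed (unifMix ε τ) := by
  have hcard : (0 : ℝ) < Fintype.card S := by exact_mod_cast Fintype.card_pos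
  refine ⟨fun a => add_pos_of_nonneg_of_pos (mul_nonneg (by linarith) (hτ.1 a)) (by positivity),
    ?_⟩
  simp only [unifMix, Finset.sum_add_distrib, ← Finset.mul_sum, hτ.2, Finset.sum_const,
    Finset.card_univ, nsmul_eq_mul]
  field_simp
  ring

lemma tendsto_unifMix {ι : Type*} {l : Filter ι} {ε : ι → ℝ} (hε : Tendsto ε l (𝓝 0))
    (τ : S → ℝ) (a : S) : Tendsto (fun k => unifMix (ε k) τ a) l (𝓝 (τ a)) := by
  have hlim := (((tendsto_const_nhds (x := (1 : ℝ))).sub hε).mul_const (τ a)).add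
    (hε.div_const (Fintype.card S : ℝ))
  simpa [unifMix] using hlim

end Strategies

section Payoffs

variable {S1 S2 S3 : Type*} [Fintype S2] [Fintype S3]

lemma expPure1_of_forall_eq {w : S1 → S2 → S3 → ℝ} {a : S1} {x : ℝ} (hw : ∀ b c, w a b c = x)
    {σ2 : S2 → ℝ} {σ3 : S3 → ℝ} (h2 : ∑ b, σ2 b = 1) (h3 : ∑ c, σ3 c = 1) :
    expPure1 w a σ2 σ3 = x := by
  simp only [expPure1, hw, ← Finset.sum_mul, mul_assoc, ← Finset.mul_sum, h3, h2, one_mul]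

lemma le_expPure1 {w : S1 → S2 → S3 → ℝ} {a : S1} {m : ℝ} (hw : ∀ b c, m ≤ w a b c)
    {σ2 : S2 → ℝ} {σ3 : S3 → ℝ} (h2 : IsMixed σ2) (h3 : IsMixed σ3) :
    m ≤ expPure1 w a σ2 σ3 :=
  calc m = expPure1 (fun _ _ _ => m) a σ2 σ3 :=
        (expPure1_of_forall_eq (fun _ _ => rfl) h2.2 h3.2).symm
    _ ≤ expPure1 w a σ2 σ3 := Finset.sum_le_sum fun b _ => Finset.sum_le_sum fun c _ =>
      mul_le_mul_of_nonneg_left (hw b c) (mul_nonneg (h2.1 b) (h3.1 c))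

lemma tendsto_expPure1 {ι : Type*} {l : Filter ι} (w : S1 → S2 → S3 → ℝ) (a : S1)
    {σ2 : ι → S2 → ℝ} {σ3 : ι → S3 → ℝ} {τ2 : S2 → ℝ} {τ3 : S3 → ℝ}
    (h2 : ∀ b, Tendsto (fun k => σ2 k b) l (𝓝 (τ2 b)))
    (h3 : ∀ c, Tendsto (fun k => σ3 k c) l (𝓝 (τ3 c))) :
    Tendsto (fun k => expPure1 w a (σ2 k) (σ3 k)) l (𝓝 (expPure1 w a τ2 τ3)) :=
  tendsto_finsetSum _ fun b _ => tendsto_finsetSum _ fun c _ => ((h2 b).mul (h3 c)).mul_const _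

variable [Fintype S1]

lemma expMix3_eq_sum (w : S1 → S2 → S3 → ℝ) (σ1 : S1 → ℝ) (σ2 : S2 → ℝ) (σ3 : S3 → ℝ) :
    expMix3 w σ1 σ2 σ3 = ∑ a, σ1 a * expPure1 w a σ2 σ3 := by
  simp [expMix3, expPure1, Finset.mul_sum, mul_assoc]

lemma expMix3_pureStrat [DecidableEq S1] (w : S1 → S2 → S3 → ℝ) (a : S1) (σ2 : S2 → ℝ)
    (σ3 : S3 → ℝ) : expMix3 w (pureStrat a) σ2 σ3 = expPure1 w a σ2 σ3 := by
  simp [expMix3_eq_sum, pureStrat]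

lemma pureStrat_bestReply1_iff [DecidableEq S1] (w : S1 → S2 → S3 → ℝ) (a₀ : S1)
    (σ2 : S2 → ℝ) (σ3 : S3 → ℝ) :
    (∀ τ, IsMixed τ → expMix3 w τ σ2 σ3 ≤ expMix3 w (pureStrat a₀) σ2 σ3) ↔
      ∀ a, expPure1 w a σ2 σ3 ≤ expPure1 w a₀ σ2 σ3 := by
  simp only [expMix3_pureStrat]
  refine ⟨fun h a => by simpa [expMix3_pureStrat] using h _ (isMixed_pureStrat a), fun h τ hτ => ?_⟩
  calc expMix3 w τ σ2 σ3 = ∑ a, τ a * expPure1 w a σ2 σ3 := expMix3_eq_sum ..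
    _ ≤ ∑ a, τ a * expPure1 w a₀ σ2 σ3 :=
      Finset.sum_le_sum fun a _ => mul_le_mul_of_nonneg_left (h a) (hτ.1 a)
    _ = expPure1 w a₀ σ2 σ3 := by rw [← Finset.sum_mul, hτ.2, one_mul]

end Payoffs

section BotGame

variable {S1 S2 S3 : Type*} [Fintype S2] [Fintype S3]

lemma expPure1_payBot_none (u1 : S1 → S2 → S3 → ℤ) (r : ℤ) {σ2 : Option S2 → ℝ}
    {σ3 : Option S3 → ℝ} (h2 : ∑ b, σ2 b = 1) (h3 : ∑ c, σ3 c = 1) :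
    expPure1 (payBot u1 r) none σ2 σ3 = r :=
  expPure1_of_forall_eq (fun b c => by cases b <;> cases c <;> rfl) h2 h3

lemma expPure1_payBot_some_withBot (u1 : S1 → S2 → S3 → ℤ) (r : ℤ) (a : S1) {e2 e3 : ℝ}
    {ρ2 : S2 → ℝ} {ρ3 : S3 → ℝ} (h2 : ∑ b, ρ2 b = 1) (h3 : ∑ c, ρ3 c = 1) :
    expPure1 (payBot u1 r) (some a) (withBot e2 ρ2) (withBot e3 ρ3) =
      (1 - e2 * e3) * r + e2 * e3 * expPure1 (fun a b c => (u1 a b c : ℝ)) a ρ2 ρ3 := by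
  simp only [expPure1, Fintype.sum_option, withBot, Option.elim, payBot]
  simp only [← Finset.sum_mul, ← Finset.mul_sum, h3]
  have hbot : ∑ b, e2 * ρ2 b * (1 - e3) * r = e2 * (1 - e3) * r := by
    simp only [← Finset.sum_mul, ← Finset.mul_sum, h2, mul_one]
  have hG : ∑ b, ∑ c, e2 * ρ2 b * (e3 * ρ3 c) * (u1 a b c : ℝ) =
      e2 * e3 * ∑ b, ∑ c, ρ2 b * ρ3 c * (u1 a b c : ℝ) := by
    simp only [Finset.mul_sum]
    exact Finset.sum_congr rfl fun b _ => Finset.sum_congr rfl fun c _ => by ring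
  rw [Finset.sum_add_distrib, hbot, hG]
  ring

variable [Fintype S1] [DecidableEq S1]

lemma bestReply1_pureStrat_none_iff (u1 : S1 → S2 → S3 → ℤ) (r : ℤ) {e2 e3 : ℝ}
    (he : 0 < e2 * e3) {ρ2 : S2 → ℝ} {ρ3 : S3 → ℝ} (h2 : ∑ b, ρ2 b = 1) (h3 : ∑ c, ρ3 c = 1) :
    (∀ τ, IsMixed τ → expMix3 (payBot u1 r) τ (withBot e2 ρ2) (withBot e3 ρ3) ≤
        expMix3 (payBot u1 r) (pureStrat none) (withBot e2 ρ2) (withBot e3 ρ3)) ↔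
      ∀ a, expPure1 (fun a b c => (u1 a b c : ℝ)) a ρ2 ρ3 ≤ r := by
  rw [pureStrat_bestReply1_iff, Option.forall,
    expPure1_payBot_none u1 r (sum_withBot h2) (sum_withBot h3)]
  simp only [le_refl, true_and, expPure1_payBot_some_withBot u1 r _ h2 h3]
  refine forall_congr' fun a => ⟨fun h => le_of_mul_le_mul_left (by linarith) he, fun h => ?_⟩
  nlinarith [mul_le_mul_of_nonneg_left h he.le]

end BotGame

section Minmax

variable {S1 S2 S3 : Type*} [Fintype S1] [Fintype S2] [Fintype S3] [Nonempty S1]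

lemma bddBelow_minmaxVal_set (w : S1 → S2 → S3 → ℝ) :
    BddBelow {x | ∃ σ2 σ3, IsMixed σ2 ∧ IsMixed σ3 ∧ x = ⨆ a, expPure1 w a σ2 σ3} := by
  obtain ⟨m, hm⟩ := (Set.finite_range fun p : S1 × S2 × S3 => w p.1 p.2.1 p.2.2).bddBelow
  refine ⟨m, ?_⟩
  rintro _ ⟨σ2, σ3, h2, h3, rfl⟩
  have a := Classical.arbitrary S1
  exact (le_expPure1 (fun b c => hm ⟨(a, b, c), rfl⟩) h2 h3).trans
    (le_ciSup (f := fun a => expPure1 w a σ2 σ3) (Set.finite_range _).bddAbove a)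

lemma minmaxVal_le_of_forall_expPure1_le {w : S1 → S2 → S3 → ℝ} {σ2 : S2 → ℝ} {σ3 : S3 → ℝ}
    (h2 : IsMixed σ2) (h3 : IsMixed σ3) {x : ℝ} (h : ∀ a, expPure1 w a σ2 σ3 ≤ x) :
    minmaxVal w ≤ x :=
  (csInf_le (bddBelow_minmaxVal_set w) ⟨σ2, σ3, h2, h3, rfl⟩).trans (ciSup_le h)

lemma exists_forall_expPure1_lt_of_minmaxVal_lt [Nonempty S2] [Nonempty S3]
    {w : S1 → S2 → S3 → ℝ} {x : ℝ} (h : minmaxVal w < x) :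
    ∃ σ2 σ3, IsMixed σ2 ∧ IsMixed σ3 ∧ ∀ a, expPure1 w a σ2 σ3 < x := by
  classical
  have hne : {x | ∃ σ2 σ3, IsMixed σ2 ∧ IsMixed σ3 ∧ x = ⨆ a, expPure1 w a σ2 σ3}.Nonempty :=
    ⟨_, _, _, isMixed_pureStrat (Classical.arbitrary S2),
      isMixed_pureStrat (Classical.arbitrary S3), rfl⟩
  obtain ⟨_, ⟨σ2, σ3, h2, h3, rfl⟩, hlt⟩ := (csInf_lt_iff (bddBelow_minmaxVal_set w) hne).1 h
  exact ⟨σ2, σ3, h2, h3, fun a => (le_ciSup (Set.finite_range _).bddAbove a).trans_lt hlt⟩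

end Minmax

section Perfection

variable {S1 S2 S3 : Type*} [Fintype S1] [Fintype S2] [Fintype S3]

lemma expMix3_zeroPay (σ1 : Option S1 → ℝ) (σ2 : Option S2 → ℝ) (σ3 : Option S3 → ℝ) :
    expMix3 zeroPay σ1 σ2 σ3 = 0 := by
  simp [expMix3, zeroPay]

variable [DecidableEq S1] [DecidableEq S2] [DecidableEq S3]

lemma isTHP3_payBot_of_forall_expPure1_lt [Nonempty S1] [Nonempty S2] [Nonempty S3]
    (u1 : S1 → S2 → S3 → ℤ) (r : ℤ) {τ2 : S2 → ℝ} {τ3 : S3 → ℝ} (h2 : IsMixed τ2)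
    (h3 : IsMixed τ3) (hlt : ∀ a, expPure1 (fun a b c => (u1 a b c : ℝ)) a τ2 τ3 < r) :
    IsTHP3 (payBot u1 r) zeroPay zeroPay
      (pureStrat (none : Option S1)) (pureStrat (none : Option S2))
      (pureStrat (none : Option S3)) := by
  set ε : ℕ → ℝ := fun k => 1 / ((k : ℝ) + 2)
  have hε0 : ∀ k, 0 < ε k := fun k => by positivity
  have hε1 : ∀ k, ε k < 1 := fun k => by
    rw [div_lt_one (by positivity)]
    linarith [(k.cast_nonneg : (0 : ℝ) ≤ k)]
  have hε : Tendsto ε atTop (𝓝 0) := by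
    refine Tendsto.congr (fun k => ?_)
      ((tendsto_one_div_add_atTop_nhds_zero_nat (𝕜 := ℝ)).comp (tendsto_add_atTop_nat 1))
    simp only [ε, Function.comp_apply, Nat.cast_add, Nat.cast_one]
    ring
  have hev : ∀ᶠ k in atTop, ∀ a,
      expPure1 (fun a b c => (u1 a b c : ℝ)) a (unifMix (ε k) τ2) (unifMix (ε k) τ3) < r :=
    eventually_all.2 fun a => (tendsto_expPure1 _ a (tendsto_unifMix hε τ2)
      (tendsto_unifMix hε τ3)).eventually (gt_mem_nhds (hlt a))
  obtain ⟨N, hN⟩ := eventually_atTop.1 hev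
  have hρ1 k :=
    (isMixed_pureStrat (Classical.arbitrary S1)).isFullyMixed_unifMix (hε0 k) (hε1 k).le
  have hρ2 k := h2.isFullyMixed_unifMix (hε0 k) (hε1 k).le
  have hρ3 k := h3.isFullyMixed_unifMix (hε0 k) (hε1 k).le
  refine ⟨fun k => withBot (ε k) (unifMix (ε k) (pureStrat (Classical.arbitrary S1))),
    fun k => withBot (ε k) (unifMix (ε k) τ2), fun k => withBot (ε k) (unifMix (ε k) τ3),
    fun k => ⟨isFullyMixed_withBot (hρ1 k) (hε0 k) (hε1 k),
      isFullyMixed_withBot (hρ2 k) (hε0 k) (hε1 k),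
      isFullyMixed_withBot (hρ3 k) (hε0 k) (hε1 k)⟩,
    tendsto_withBot hε (tendsto_unifMix hε _), tendsto_withBot hε (tendsto_unifMix hε _),
    tendsto_withBot hε (tendsto_unifMix hε _), N, fun k hk => ⟨?_, by simp [expMix3_zeroPay],
    by simp [expMix3_zeroPay]⟩⟩
  exact (bestReply1_pureStrat_none_iff u1 r (mul_pos (hε0 k) (hε0 k)) (hρ2 k).2 (hρ3 k).2).2
    fun a => (hN k hk a).le

lemma exists_forall_expPure1_le_of_isTHP3_payBot [Nonempty S2] [Nonempty S3]
    (u1 : S1 → S2 → S3 → ℤ) (r : ℤ)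
    (h : IsTHP3 (payBot u1 r) zeroPay zeroPay
      (pureStrat (none : Option S1)) (pureStrat (none : Option S2))
      (pureStrat (none : Option S3))) :
    ∃ τ2 τ3, IsMixed τ2 ∧ IsMixed τ3 ∧
      ∀ a, expPure1 (fun a b c => (u1 a b c : ℝ)) a τ2 τ3 ≤ r := by
  obtain ⟨_, σ2, σ3, hfm, -, -, -, N, hN⟩ := h
  obtain ⟨p2, τ2, hp2, hτ2, hσ2⟩ := (hfm N).2.1.exists_eq_withBot
  obtain ⟨p3, τ3, hp3, hτ3, hσ3⟩ := (hfm N).2.2.exists_eq_withBot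
  have hbest := (hN N le_rfl).1
  rw [hσ2, hσ3, bestReply1_pureStrat_none_iff u1 r (mul_pos hp2 hp3) hτ2.2 hτ3.2] at hbest
  exact ⟨τ2, τ3, hτ2, hτ3, hbest⟩

end Perfection

/-- the Nash equilibrium `(⊥,⊥,⊥)` of `G'` is trembling hand perfect
if Player 1's minmax value in `G` is strictly less than `r`, and is not trembling
hand perfect if the minmax value is strictly greater than `r`. -/
theorem minmax_reduces_to_THP
    {S1 S2 S3 : Type*} [Fintype S1] [Fintype S2] [Fintype S3]
    [Nonempty S1] [Nonempty S2] [Nonempty S3]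
    [DecidableEq S1] [DecidableEq S2] [DecidableEq S3]
    (u1 : S1 → S2 → S3 → ℤ) (r : ℤ) :
    (minmaxVal (fun a b c => (u1 a b c : ℝ)) < (r : ℝ) →
      IsTHP3 (payBot u1 r) zeroPay zeroPay
        (pureStrat (none : Option S1)) (pureStrat (none : Option S2))
        (pureStrat (none : Option S3))) ∧
    ((r : ℝ) < minmaxVal (fun a b c => (u1 a b c : ℝ)) →
      ¬ IsTHP3 (payBot u1 r) zeroPay zeroPay
        (pureStrat (none : Option S1)) (pureStrat (none : Option S2))
        (pureStrat (none : Option S3))) := by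
  refine ⟨fun hlt => ?_, fun hlt hTHP => ?_⟩
  · obtain ⟨τ2, τ3, h2, h3, hτ⟩ := exists_forall_expPure1_lt_of_minmaxVal_lt hlt
    exact isTHP3_payBot_of_forall_expPure1_lt u1 r h2 h3 hτ
  · obtain ⟨τ2, τ3, h2, h3, hτ⟩ := exists_forall_expPure1_le_of_isTHP3_payBot u1 r hTHP
    exact (minmaxVal_le_of_forall_expPure1_le h2 h3 hτ).not_gt hlt
end
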